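/- In the transitive case a quantum moment map sends central elements of U(g_λ) to scalars: assume λ is regular on A and that (A, ρ) is transitive. Let Φ : U(g_λ) → A be a quantum moment map in enveloping form. Then for every l in the center of U(g_λ), Φ(l) lies in the image of the structure map R → A; i.e. there exists c_*(l) ∈ R = ℂ[[λ]] with Φ(l) = c_*(l) • 1. -/

import Mathlib

noncomputable section

set_option synthInstance.maxHeartbeats 800000
set_option maxHeartbeats 1600000

open scoped TensorProduct

/-- `R = ℂ[[λ]]`, the ring of formal power series over `ℂ`. -/
abbrev Rl : Type := PowerSeries ℂ

/-- The formal parameter `λ`. -/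
def lam : Rl := PowerSeries.X

section GLamConstruction

variable {g : Type*} [LieRing g] [LieAlgebra ℂ g]

private lemma glam_aux_add_lie (x y z : Rl ⊗[ℂ] g) :
    lam • ⁅x + y, z⁆ = lam • ⁅x, z⁆ + lam • ⁅y, z⁆ :=
  (congrArg (lam • ·) (add_lie x y z)).trans (smul_add lam ⁅x, z⁆ ⁅y, z⁆)

private lemma glam_aux_lie_add (x y z : Rl ⊗[ℂ] g) :
    lam • ⁅x, y + z⁆ = lam • ⁅x, y⁆ + lam • ⁅x, z⁆ :=
  (congrArg (lam • ·) (lie_add x y z)).trans (smul_add lam ⁅x, y⁆ ⁅x, z⁆)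

private lemma glam_aux_lie_self (x : Rl ⊗[ℂ] g) : lam • ⁅x, x⁆ = 0 :=
  (congrArg (lam • ·) (lie_self x)).trans (smul_zero lam)

private lemma glam_aux_leibniz (x y z : Rl ⊗[ℂ] g) :
    lam • ⁅x, lam • ⁅y, z⁆⁆ = lam • ⁅lam • ⁅x, y⁆, z⁆ + lam • ⁅y, lam • ⁅x, z⁆⁆ := by
  have h1 : ⁅x, lam • ⁅y, z⁆⁆ = lam • ⁅x, ⁅y, z⁆⁆ := lie_smul lam x ⁅y, z⁆
  have h2 : ⁅lam • ⁅x, y⁆, z⁆ = lam • ⁅⁅x, y⁆, z⁆ := smul_lie lam ⁅x, y⁆ z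
  have h3 : ⁅y, lam • ⁅x, z⁆⁆ = lam • ⁅y, ⁅x, z⁆⁆ := lie_smul lam y ⁅x, z⁆
  have h4 : ⁅x, ⁅y, z⁆⁆ = ⁅⁅x, y⁆, z⁆ + ⁅y, ⁅x, z⁆⁆ := LieRing.leibniz_lie x y z
  calc lam • ⁅x, lam • ⁅y, z⁆⁆ = lam • (lam • ⁅x, ⁅y, z⁆⁆) := congrArg (lam • ·) h1
    _ = lam • (lam • (⁅⁅x, y⁆, z⁆ + ⁅y, ⁅x, z⁆⁆)) :=
          congrArg (fun w => lam • lam • w) h4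
    _ = lam • (lam • ⁅⁅x, y⁆, z⁆ + lam • ⁅y, ⁅x, z⁆⁆) :=
          congrArg (lam • ·) (smul_add lam _ _)
    _ = lam • (lam • ⁅⁅x, y⁆, z⁆) + lam • (lam • ⁅y, ⁅x, z⁆⁆) := smul_add lam _ _
    _ = lam • ⁅lam • ⁅x, y⁆, z⁆ + lam • ⁅y, lam • ⁅x, z⁆⁆ := by
          rw [← h2]
          exact congrArg (fun w => lam • ⁅lam • ⁅x, y⁆, z⁆ + lam • w) h3.symm

private lemma glam_aux_lie_smul (c : Rl) (x y : Rl ⊗[ℂ] g) :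
    lam • ⁅x, c • y⁆ = c • (lam • ⁅x, y⁆) :=
  (congrArg (lam • ·) (lie_smul c x y)).trans (smul_comm lam c ⁅x, y⁆)

end GLamConstruction

variable (g : Type*) [LieRing g] [LieAlgebra ℂ g]

/-- The underlying `R`-module of `g_λ` is the base change `R ⊗_ℂ g`. -/
def GLam : Type _ := Rl ⊗[ℂ] g

variable {g}

/-- The identification `R ⊗_ℂ g → g_λ`. -/
def GLam.ofT : (Rl ⊗[ℂ] g) → GLam g := id

/-- The identification `g_λ → R ⊗_ℂ g`. -/
def GLam.toT : GLam g → Rl ⊗[ℂ] g := id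

instance : AddCommGroup (GLam g) := inferInstanceAs (AddCommGroup (Rl ⊗[ℂ] g))
instance : Module Rl (GLam g) := inferInstanceAs (Module Rl (Rl ⊗[ℂ] g))

/-- The Lie ring structure of `g_λ`: the bracket is the `λ`-multiple of the
base-change bracket, so that `⁅f ⊗ X, h ⊗ Y⁆ = (λ·f·h) ⊗ ⁅X,Y⁆`. -/
instance : LieRing (GLam g) where
  bracket x y := GLam.ofT (lam • ⁅GLam.toT x, GLam.toT y⁆)
  add_lie x y z := congrArg GLam.ofT (glam_aux_add_lie x.toT y.toT z.toT)
  lie_add x y z := congrArg GLam.ofT (glam_aux_lie_add x.toT y.toT z.toT)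
  lie_self x := congrArg GLam.ofT (glam_aux_lie_self x.toT)
  leibniz_lie x y z := congrArg GLam.ofT (glam_aux_leibniz x.toT y.toT z.toT)

/-- `g_λ` is a Lie algebra over `R = ℂ[[λ]]`. -/
instance : LieAlgebra Rl (GLam g) where
  lie_smul c x y := congrArg GLam.ofT (glam_aux_lie_smul c x.toT y.toT)

/-- On pure tensors the bracket of `g_λ` is `⁅f ⊗ X, h ⊗ Y⁆ = (λ·f·h) ⊗ ⁅X,Y⁆`. -/
lemma GLam.bracket_tmul (f h : Rl) (X Y : g) :
    (⁅GLam.ofT (f ⊗ₜ[ℂ] X), GLam.ofT (h ⊗ₜ[ℂ] Y)⁆ : GLam g)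
      = GLam.ofT ((lam * f * h) ⊗ₜ[ℂ] ⁅X, Y⁆) :=
  congrArg GLam.ofT <| by
    have h1 : (⁅f ⊗ₜ[ℂ] X, h ⊗ₜ[ℂ] Y⁆ : Rl ⊗[ℂ] g) = (f * h) ⊗ₜ[ℂ] ⁅X, Y⁆ :=
      LieAlgebra.ExtendScalars.bracket_tmul ℂ Rl g g f h X Y
    calc lam • (⁅f ⊗ₜ[ℂ] X, h ⊗ₜ[ℂ] Y⁆ : Rl ⊗[ℂ] g)
        = lam • ((f * h) ⊗ₜ[ℂ] ⁅X, Y⁆) := congrArg (lam • ·) h1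
      _ = (lam * f * h) ⊗ₜ[ℂ] ⁅X, Y⁆ := by
          rw [TensorProduct.smul_tmul', smul_eq_mul, mul_assoc]

/-- The universal enveloping algebra `U(g_λ)` over `R`. -/
abbrev UEnvLam (g : Type*) [LieRing g] [LieAlgebra ℂ g] : Type _ :=
  UniversalEnvelopingAlgebra Rl (GLam g)

/-- The canonical map `ι : g → U(g_λ)`, `X ↦ 1 ⊗ X`. -/
def iotaLam (X : g) : UEnvLam g :=
  UniversalEnvelopingAlgebra.ι Rl (GLam.ofT ((1 : Rl) ⊗ₜ[ℂ] X))

/-- `ρ : g → Der(A)` is an action of the `ℂ`-Lie algebra `g` on the `R`-algebra `A`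
by `R`-linear derivations, i.e. a `ℂ`-Lie-algebra homomorphism into the Lie algebra
of `R`-linear derivations of `A`. -/
def IsDerAction {g A : Type*} [LieRing g] [LieAlgebra ℂ g]
    [Ring A] [Algebra Rl A] (ρ : g → A →ₗ[Rl] A) : Prop :=
  (∀ X (a b : A), ρ X (a * b) = ρ X a * b + a * ρ X b) ∧
  (∀ X Y, ρ (X + Y) = ρ X + ρ Y) ∧
  (∀ (c : ℂ) X (a : A), ρ (c • X) a = algebraMap ℂ Rl c • ρ X a) ∧
  (∀ X Y (a : A), ρ ⁅X, Y⁆ a = ρ X (ρ Y a) - ρ Y (ρ X a))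

/-- A quantum moment map in enveloping form for `(A, ρ)`: an `R`-algebra
homomorphism `Φ : U(g_λ) → A` with `Φ(ι X)·a − a·Φ(ι X) = λ • ρ(X)(a)`. -/
def IsQMMEnv {g A : Type*} [LieRing g] [LieAlgebra ℂ g]
    [Ring A] [Algebra Rl A]
    (ρ : g → A →ₗ[Rl] A) (Φ : UEnvLam g →ₐ[Rl] A) : Prop :=
  ∀ (X : g) (a : A), Φ (iotaLam X) * a - a * Φ (iotaLam X) = lam • ρ X a

/-- In the transitive case a quantum moment map sends central elements of
`U(g_λ)` to scalars `c_*(l) ∈ ℂ[[λ]]`. -/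
theorem qmm_central_to_scalar
    {g A : Type*} [LieRing g] [LieAlgebra ℂ g]
    [Ring A] [Algebra Rl A]
    (ρ : g → A →ₗ[Rl] A) (hρ : IsDerAction ρ)
    (hreg : Function.Injective fun a : A => lam • a)
    (htrans : {a : A | ∀ X : g, ρ X a = 0} = Set.range (algebraMap Rl A))
    (Φ : UEnvLam g →ₐ[Rl] A) (hΦ : IsQMMEnv ρ Φ) :
    ∀ l ∈ Subring.center (UEnvLam g), ∃ c : Rl, Φ l = c • (1 : A) := by
  intro l hl
  have hinv : ∀ X : g, ρ X (Φ l) = 0 := by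
    intro X
    apply hreg
    show lam • ρ X (Φ l) = lam • (0 : A)
    rw [smul_zero, ← hΦ X (Φ l), ← map_mul, ← map_mul,
      (Subring.mem_center_iff.mp hl (iotaLam X)).symm, sub_self]
  have : Φ l ∈ Set.range (algebraMap Rl A) := by
    rw [← htrans]; exact hinv
  obtain ⟨c, hc⟩ := this
  exact ⟨c, by rw [← hc, Algebra.smul_def, mul_one]⟩
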